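/- arXiv:math/9506208 — 6 statements merged into one kernel-verified Lean document; each statement's English description precedes it below -/
import Mathlib

section
/- A subalgebra A of a Boolean algebra B is a regular subalgebra of B if and only if the completion of A is a regular subalgebra (equivalently, a complete subalgebra) of the completion of B, via the induced embedding. -/
/-- `f` is a Boolean algebra embedding. -/
def IsBAEmb {A B : Type*} [BooleanAlgebra A] [BooleanAlgebra B] (f : A → B) : Prop :=
  Function.Injective f ∧ (∀ x y, f (x ⊔ y) = f x ⊔ f y) ∧ (∀ x y, f (x ⊓ y) = f x ⊓ f y) ∧
    (∀ x, f xᶜ = (f x)ᶜ) ∧ f ⊥ = ⊥ ∧ f ⊤ = ⊤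

/-- The image of `f` is dense in the target. -/
def DenseIm {A B : Type*} [BooleanAlgebra A] [BooleanAlgebra B] (f : A → B) : Prop :=
  ∀ b : B, b ≠ ⊥ → ∃ a : A, f a ≠ ⊥ ∧ f a ≤ b

/-- `e : B → Bbar` realizes `Bbar` as the completion of `B`:
a dense Boolean embedding into a complete Boolean algebra. -/
def IsCompletion {B Bbar : Type*} [BooleanAlgebra B] [CompleteBooleanAlgebra Bbar]
    (e : B → Bbar) : Prop :=
  IsBAEmb e ∧ DenseIm e

/-- `f` is a regular embedding: it preserves all existing suprema. -/
def RegEmb {A B : Type*} [BooleanAlgebra A] [BooleanAlgebra B] (f : A → B) : Prop :=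
  ∀ X : Set A, ∀ a : A, IsLUB X a → IsLUB (f '' X) (f a)

/-!
A regular embedding `h : A → C` into a complete Boolean algebra extends along the completion
`e : A → Abar` by `g x = ⨆ {h a | e a ≤ x}`. The only real point is that `g` preserves arbitrary
suprema: if `e a ≤ ⨆ e '' S` then, `Abar` being a frame, `a` is the supremum in `A` of the
elements `a ⊓ s` (`s ∈ S`), which `h` preserves. Conversely, a supremum in `A` is preserved by the
dense embedding into `Abar`, then by the complete embedding of the completions, and is reflected
by the order embedding `B → Bbar`.
-/

namespace IsBAEmb

variable {A B C : Type*} [BooleanAlgebra A] [BooleanAlgebra B] [BooleanAlgebra C] {f : A → B}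

theorem injective (hf : IsBAEmb f) : Function.Injective f := hf.1

theorem map_sup (hf : IsBAEmb f) (x y : A) : f (x ⊔ y) = f x ⊔ f y := hf.2.1 x y

theorem map_inf (hf : IsBAEmb f) (x y : A) : f (x ⊓ y) = f x ⊓ f y := hf.2.2.1 x y

theorem map_compl (hf : IsBAEmb f) (x : A) : f xᶜ = (f x)ᶜ := hf.2.2.2.1 x

theorem map_bot (hf : IsBAEmb f) : f ⊥ = ⊥ := hf.2.2.2.2.1

theorem map_top (hf : IsBAEmb f) : f ⊤ = ⊤ := hf.2.2.2.2.2

theorem le_iff (hf : IsBAEmb f) {x y : A} : f x ≤ f y ↔ x ≤ y := by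
  rw [← inf_eq_left, ← hf.map_inf, hf.injective.eq_iff, inf_eq_left]

protected theorem monotone (hf : IsBAEmb f) : Monotone f := fun _ _ => hf.le_iff.2

theorem eq_bot_iff (hf : IsBAEmb f) {x : A} : f x = ⊥ ↔ x = ⊥ := by
  rw [← hf.map_bot, hf.injective.eq_iff]

theorem disjoint_iff (hf : IsBAEmb f) {x y : A} : Disjoint (f x) (f y) ↔ Disjoint x y := by
  rw [_root_.disjoint_iff, _root_.disjoint_iff, ← hf.map_inf, hf.eq_bot_iff]

theorem comp {g : B → C} (hg : IsBAEmb g) (hf : IsBAEmb f) : IsBAEmb (g ∘ f) :=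
  ⟨hg.injective.comp hf.injective, fun x y => by simp [hf.map_sup, hg.map_sup],
    fun x y => by simp [hf.map_inf, hg.map_inf], fun x => by simp [hf.map_compl, hg.map_compl],
    by simp [hf.map_bot, hg.map_bot], by simp [hf.map_top, hg.map_top]⟩

theorem of_eq_bot {g : A → B} (hsup : ∀ x y, g (x ⊔ y) = g x ⊔ g y)
    (hinf : ∀ x y, g (x ⊓ y) = g x ⊓ g y) (hbot : g ⊥ = ⊥) (htop : g ⊤ = ⊤)
    (hker : ∀ x, g x = ⊥ → x = ⊥) : IsBAEmb g := by
  have hcompl (x : A) : g xᶜ = (g x)ᶜ :=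
    (IsCompl.of_eq (by rw [← hinf, inf_compl_eq_bot, hbot])
      (by rw [← hsup, sup_compl_eq_top, htop])).compl_eq.symm
  have hle {x y : A} (hxy : g x = g y) : x ≤ y := by
    rw [← disjoint_compl_right_iff, _root_.disjoint_iff]
    exact hker _ (by rw [hinf, hcompl, hxy, inf_compl_eq_bot])
  exact ⟨fun x y hxy => le_antisymm (hle hxy) (hle hxy.symm), hsup, hinf, hcompl, hbot, htop⟩

end IsBAEmb

theorem RegEmb.comp {A B C : Type*} [BooleanAlgebra A] [BooleanAlgebra B] [BooleanAlgebra C]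
    {g : B → C} {f : A → B} (hg : RegEmb g) (hf : RegEmb f) : RegEmb (g ∘ f) :=
  fun X a hXa => by
    rw [Set.image_comp]
    exact hg _ _ (hf X a hXa)

theorem RegEmb.le_sSup_image {A C : Type*} [BooleanAlgebra A] [CompleteBooleanAlgebra C]
    {h : A → C} (hreg : RegEmb h) (hmono : Monotone h) {S : Set A} {a : A}
    (ha : IsLUB ((a ⊓ ·) '' S) a) : h a ≤ sSup (h '' S) :=
  (hreg _ _ ha).2 <| by
    rintro _ ⟨_, ⟨s, hs, rfl⟩, rfl⟩
    exact (hmono inf_le_right).trans (le_sSup ⟨s, hs, rfl⟩)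

theorem isLUB_inf_image_of_le_sSup {A Abar : Type*} [Lattice A] [Order.Frame Abar] {e : A → Abar}
    (he_le : ∀ {x y}, e x ≤ e y ↔ x ≤ y) (he_inf : ∀ x y, e (x ⊓ y) = e x ⊓ e y)
    {S : Set A} {a : A} (ha : e a ≤ sSup (e '' S)) : IsLUB ((a ⊓ ·) '' S) a := by
  refine ⟨by rintro _ ⟨s, -, rfl⟩; exact inf_le_left, fun u hu => he_le.1 ?_⟩
  calc e a = e a ⊓ sSup (e '' S) := (inf_eq_left.2 ha).symm
    _ = ⨆ s ∈ S, e (a ⊓ s) := by simp only [sSup_image, inf_iSup₂_eq, he_inf]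
    _ ≤ e u := iSup₂_le fun s hs => he_le.2 (hu ⟨s, hs, rfl⟩)

namespace DenseIm

variable {B Bbar : Type*} [BooleanAlgebra B] [BooleanAlgebra Bbar] {e : B → Bbar}

theorem eq_bot_of_forall (hd : DenseIm e) {x : Bbar} (hx : ∀ b, e b ≤ x → e b = ⊥) : x = ⊥ := by
  by_contra hne
  obtain ⟨b, hb, hbx⟩ := hd x hne
  exact hb (hx b hbx)

theorem regEmb (hd : DenseIm e) (he : IsBAEmb e) : RegEmb e := by
  intro X a hXa
  refine ⟨he.monotone.mem_upperBounds_image hXa.1, fun u hu => ?_⟩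
  rw [← disjoint_compl_right_iff, _root_.disjoint_iff]
  refine hd.eq_bot_of_forall fun b hb => ?_
  have hba : b ≤ a := he.le_iff.1 (hb.trans inf_le_left)
  have hbX : bᶜ ∈ upperBounds X := fun x hx =>
    le_compl_iff_disjoint_left.2 <| he.disjoint_iff.1 <|
      disjoint_compl_left.mono (hb.trans inf_le_right) (hu ⟨x, hx, rfl⟩)
  rw [he.eq_bot_iff, ← disjoint_self, ← le_compl_iff_disjoint_right]
  exact hba.trans (hXa.2 hbX)

end DenseIm

theorem IsCompletion.regEmb {B Bbar : Type*} [BooleanAlgebra B] [CompleteBooleanAlgebra Bbar]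
    {e : B → Bbar} (he : IsCompletion e) : RegEmb e :=
  he.2.regEmb he.1

section SupExtend

variable {A Abar C : Type*} {e : A → Abar} {h : A → C}

def supExtend [LE Abar] [SupSet C] (e : A → Abar) (h : A → C) (x : Abar) : C :=
  ⨆ (a) (_ : e a ≤ x), h a

theorem le_supExtend [LE Abar] [CompleteLattice C] {x : Abar} {a : A} (ha : e a ≤ x) :
    h a ≤ supExtend e h x :=
  le_iSup₂ (f := fun a (_ : e a ≤ x) => h a) a ha

theorem supExtend_le [LE Abar] [CompleteLattice C] {x : Abar} {c : C}
    (H : ∀ a, e a ≤ x → h a ≤ c) : supExtend e h x ≤ c :=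
  iSup₂_le H

theorem supExtend_mono [Preorder Abar] [CompleteLattice C] : Monotone (supExtend e h) :=
  fun _ _ hxy => supExtend_le fun _ ha => le_supExtend (ha.trans hxy)

variable [BooleanAlgebra A] [CompleteBooleanAlgebra Abar] [CompleteBooleanAlgebra C]

theorem DenseIm.supExtend_self (hd : DenseIm e) (x : Abar) : supExtend e e x = x := by
  refine le_antisymm (supExtend_le fun _ => id) ?_
  rw [← disjoint_compl_right_iff, _root_.disjoint_iff]
  exact hd.eq_bot_of_forall fun b hb =>
    disjoint_self.1 <|
      disjoint_compl_right.mono (le_supExtend (hb.trans inf_le_left)) (hb.trans inf_le_right)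

theorem supExtend_apply (he : IsBAEmb e) (hh : Monotone h) (a : A) :
    supExtend e h (e a) = h a :=
  le_antisymm (supExtend_le fun _ hb => hh (he.le_iff.1 hb)) (le_supExtend le_rfl)

theorem supExtend_inf (he : IsBAEmb e) (hh_inf : ∀ a b, h (a ⊓ b) = h a ⊓ h b) (x y : Abar) :
    supExtend e h (x ⊓ y) = supExtend e h x ⊓ supExtend e h y := by
  refine le_antisymm (le_inf (supExtend_mono inf_le_left) (supExtend_mono inf_le_right)) ?_
  simp only [supExtend, iSup₂_inf_eq, inf_iSup₂_eq, ← hh_inf]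
  exact iSup₂_le fun a ha => iSup₂_le fun b hb =>
    le_supExtend (by rw [he.map_inf]; exact inf_le_inf hb ha)

theorem supExtend_sSup (he : IsCompletion e) (hh : Monotone h) (hreg : RegEmb h) (X : Set Abar) :
    supExtend e h (sSup X) = sSup (supExtend e h '' X) := by
  refine le_antisymm (supExtend_le fun a ha => ?_)
    (sSup_le (by rintro _ ⟨x, hx, rfl⟩; exact supExtend_mono (le_sSup hx)))
  set S := {b | ∃ x ∈ X, e b ≤ x}
  have hXS : sSup X ≤ sSup (e '' S) := sSup_le fun x hx => by
    rw [← he.2.supExtend_self x]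
    exact supExtend_le fun b hb => le_sSup ⟨b, ⟨x, hx, hb⟩, rfl⟩
  calc h a ≤ sSup (h '' S) :=
        hreg.le_sSup_image hh (isLUB_inf_image_of_le_sSup he.1.le_iff he.1.map_inf (ha.trans hXS))
    _ ≤ sSup (supExtend e h '' X) := sSup_le <| by
        rintro _ ⟨b, ⟨x, hx, hb⟩, rfl⟩
        exact (le_supExtend hb).trans (le_sSup ⟨x, hx, rfl⟩)

theorem IsCompletion.exists_sSup_extension (he : IsCompletion e) (hh : IsBAEmb h)
    (hreg : RegEmb h) : ∃ g : Abar → C, IsBAEmb g ∧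
      (∀ X : Set Abar, g (sSup X) = sSup (g '' X)) ∧ ∀ a : A, g (e a) = h a := by
  have hsSup := supExtend_sSup he hh.monotone hreg
  refine ⟨supExtend e h, IsBAEmb.of_eq_bot ?_ (supExtend_inf he.1 hh.map_inf) ?_ ?_ ?_, hsSup,
    supExtend_apply he.1 hh.monotone⟩
  · intro x y
    rw [← sSup_pair, hsSup, Set.image_pair, sSup_pair]
  · simpa using hsSup ∅
  · rw [← he.1.map_top, supExtend_apply he.1 hh.monotone, hh.map_top]
  · intro x hx
    by_contra hne
    obtain ⟨a, ha, hax⟩ := he.2 x hne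
    have ha' : h a ≠ ⊥ := by rwa [Ne, hh.eq_bot_iff, ← he.1.eq_bot_iff]
    exact ha' (le_bot_iff.1 (hx ▸ le_supExtend hax))

end SupExtend

/-- Lemma 2.3(e)/(f): a subalgebra `A` of `B` (given by a Boolean embedding `f`) is
regular in `B` if and only if the completion of `A` is a regular — equivalently,
complete — subalgebra of the completion of `B` via the induced embedding, i.e. there
is a Boolean embedding `g` of the completion of `A` into the completion of `B`
commuting with `f` and preserving arbitrary suprema. -/
theorem regular_iff_completion_regular {A B Abar Bbar : Type*}
    [BooleanAlgebra A] [BooleanAlgebra B]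
    [CompleteBooleanAlgebra Abar] [CompleteBooleanAlgebra Bbar]
    (f : A → B) (eA : A → Abar) (eB : B → Bbar)
    (hf : IsBAEmb f) (heA : IsCompletion eA) (heB : IsCompletion eB) :
    RegEmb f ↔ ∃ g : Abar → Bbar, IsBAEmb g ∧
      (∀ X : Set Abar, g (sSup X) = sSup (g '' X)) ∧ ∀ a : A, g (eA a) = eB (f a) := by
  constructor
  · intro hreg
    exact heA.exists_sSup_extension (heB.1.comp hf) (heB.regEmb.comp hreg)
  · rintro ⟨g, -, hg_sSup, hg_comm⟩ X a hXa
    have himage : eB '' (f '' X) = g '' (eA '' X) := by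
      simp only [Set.image_image, hg_comm]
    refine IsLUB.of_image heB.1.le_iff ?_
    rw [himage, ← hg_comm, isLUB_iff_sSup_eq, ← hg_sSup,
      isLUB_iff_sSup_eq.1 (heA.regEmb X a hXa)]
end

section
/- Let B be a Boolean algebra such that the set of countable regular subalgebras of B is stationary in [B]^ω. Then B satisfies the countable chain condition. -/
def Subalg {B : Type*} [BooleanAlgebra B] (A : Set B) : Prop :=
  ⊥ ∈ A ∧ ⊤ ∈ A ∧ (∀ x ∈ A, ∀ y ∈ A, x ⊔ y ∈ A) ∧ (∀ x ∈ A, xᶜ ∈ A)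

/-- `W` is a maximal antichain of (the subalgebra carried by) `A`. -/
def MaxACIn {B : Type*} [BooleanAlgebra B] (W A : Set B) : Prop :=
  W ⊆ A ∧ ⊥ ∉ W ∧ W.Pairwise (fun x y => x ⊓ y = ⊥) ∧
    ∀ a ∈ A, a ≠ ⊥ → ∃ w ∈ W, a ⊓ w ≠ ⊥

/-- `X` is a regular subalgebra of `A`: every maximal antichain of `X` is a maximal
antichain of `A`. -/
def RegIn {B : Type*} [BooleanAlgebra B] (X A : Set B) : Prop :=
  ∀ W : Set B, MaxACIn W X → MaxACIn W A

/-- `C` is a closed unbounded family of countable subsets of `A`. -/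
def ClubIn {B : Type*} (A : Set B) (C : Set (Set B)) : Prop :=
  (∀ x ∈ C, x ⊆ A ∧ x.Countable) ∧
  (∀ f : ℕ → Set B, (∀ n, f n ∈ C) → Monotone f → (⋃ n, f n) ∈ C) ∧
  (∀ x : Set B, x ⊆ A → x.Countable → ∃ y ∈ C, x ⊆ y)

/-- `S` is stationary in `[A]^ω`: it meets every closed unbounded family. -/
def StatIn {B : Type*} (A : Set B) (S : Set (Set B)) : Prop :=
  ∀ C : Set (Set B), ClubIn A C → (S ∩ C).Nonempty

/-- Lemma 3.4: if the set of countable regular subalgebras of `B` is stationary in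
`[B]^ω`, then `B` satisfies the countable chain condition. -/
theorem ccc_of_stationary_regular {B : Type*} [BooleanAlgebra B]
    (hstat : StatIn (Set.univ : Set B)
      {A | A.Countable ∧ Subalg A ∧ RegIn A Set.univ}) :
    ∀ W : Set B, ⊥ ∉ W → W.Pairwise (fun x y => x ⊓ y = ⊥) → W.Countable := by
  intro W hbot hpw
  -- Extend W to a maximal antichain M via Zorn's lemma
  set S : Set (Set B) := {M | ⊥ ∉ M ∧ M.Pairwise (fun x y => x ⊓ y = ⊥)} with hS
  have hzorn : ∀ c ⊆ S, IsChain (· ⊆ ·) c → c.Nonempty →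
      ∃ ub ∈ S, ∀ s ∈ c, s ⊆ ub := by
    intro c hcS hchain hcne
    refine ⟨⋃₀ c, ⟨?_, ?_⟩, fun s hs => Set.subset_sUnion_of_mem hs⟩
    · rintro ⟨s, hs, hbs⟩; exact (hcS hs).1 hbs
    · rintro x ⟨s, hs, hxs⟩ y ⟨t, ht, hyt⟩ hxy
      rcases hchain.total hs ht with hst | hts
      · exact (hcS ht).2 (hst hxs) hyt hxy
      · exact (hcS hs).2 hxs (hts hyt) hxy
  obtain ⟨M, hWM, hMS, hMmax⟩ := zorn_subset_nonempty S hzorn W ⟨hbot, hpw⟩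
  obtain ⟨hMbot, hMpw⟩ := hMS
  -- maximality: every nonzero element meets M
  have hmeet : ∀ a : B, a ≠ ⊥ → ∃ w ∈ M, a ⊓ w ≠ ⊥ := by
    intro a ha
    by_contra h
    push_neg at h
    have haM : a ∉ M := fun hmem => ha (by simpa using h a hmem)
    have hins : insert a M ∈ S := by
      refine ⟨fun hmem => ?_, ?_⟩
      · rcases hmem with rfl | hmem
        · exact ha rfl
        · exact hMbot hmem
      · refine hMpw.insert fun y hy hne => ?_
        exact ⟨h y hy, by rw [inf_comm]; exact h y hy⟩
    have := hMmax hins (Set.subset_insert a M)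
    exact haM (this (Set.mem_insert a M))
  -- choice function
  classical
  let g : B → B := fun a => if h : ∃ w ∈ M, a ⊓ w ≠ ⊥ then h.choose else a
  have hg : ∀ a : B, a ≠ ⊥ → g a ∈ M ∧ a ⊓ g a ≠ ⊥ := by
    intro a ha
    have h := hmeet a ha
    simp only [g, dif_pos h]
    exact ⟨h.choose_spec.1, h.choose_spec.2⟩
  -- club of g-closed countable sets
  set C : Set (Set B) := {x | x.Countable ∧ ∀ a ∈ x, g a ∈ x} with hC
  have hclub : ClubIn (Set.univ : Set B) C := by
    refine ⟨fun x hx => ⟨Set.subset_univ x, hx.1⟩, ?_, ?_⟩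
    · intro f hf _
      refine ⟨Set.countable_iUnion fun n => (hf n).1, ?_⟩
      rintro a ⟨_, ⟨n, rfl⟩, han⟩
      exact Set.mem_iUnion.2 ⟨n, (hf n).2 a han⟩
    · intro x _ hxc
      set h : Set B → Set B := fun s => s ∪ g '' s with hh
      have hmono : ∀ n, h^[n] x ⊆ h^[n + 1] x := by
        intro n
        rw [Function.iterate_succ_apply']
        exact Set.subset_union_left
      refine ⟨⋃ n, h^[n] x, ⟨?_, ?_⟩, ?_⟩
      · refine Set.countable_iUnion fun n => ?_
        induction n with
        | zero => simpa using hxc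
        | succ n ih =>
          rw [Function.iterate_succ_apply']
          exact ih.union (ih.image g)
      · rintro a ⟨_, ⟨n, rfl⟩, han⟩
        refine Set.mem_iUnion.2 ⟨n + 1, ?_⟩
        rw [Function.iterate_succ_apply']
        exact Set.mem_union_right _ ⟨a, han, rfl⟩
      · exact Set.subset_iUnion (fun n => h^[n] x) 0
  obtain ⟨A, ⟨hAc, _, hAreg⟩, hAcl, hAg⟩ := hstat C hclub
  -- M ∩ A is a maximal antichain in A
  have hmax : MaxACIn (M ∩ A) A := by
    refine ⟨Set.inter_subset_right, fun h => hMbot h.1,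
      hMpw.mono Set.inter_subset_left, ?_⟩
    intro a haA ha
    exact ⟨g a, ⟨(hg a ha).1, hAg a haA⟩, (hg a ha).2⟩
  have hmaxU := hAreg (M ∩ A) hmax
  -- hence M ⊆ A
  have hMA : M ⊆ A := by
    intro w hw
    obtain ⟨v, ⟨hvM, hvA⟩, hwv⟩ := hmaxU.2.2.2 w (Set.mem_univ w) (fun h => hMbot (h ▸ hw))
    rcases eq_or_ne w v with rfl | hne
    · exact hvA
    · exact absurd (hMpw hw hvM hne) hwv
  exact (hAc.mono hMA).mono hWM
end

section
/- Let B be a complete Boolean algebra of uniform density, and let A be a complete subalgebra of B whose density is strictly less than the density of B. Then for every v ∈ B there exists u ∈ B independent over A (i.e., a · u ≠ 0 and a − u ≠ 0 for all nonzero a ∈ A) such that v belongs to the subalgebra generated by A together with u. -/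
/-- Density of the Boolean algebra `B ↾ a`: the least cardinality of a set of
nonzero elements below `a` that is dense below `a`. -/
noncomputable def densBelow {B : Type*} [BooleanAlgebra B] (a : B) : Cardinal :=
  sInf {c : Cardinal | ∃ D : Set B, (∀ d ∈ D, d ≤ a ∧ d ≠ ⊥) ∧
    (∀ b : B, b ≤ a → b ≠ ⊥ → ∃ d ∈ D, d ≤ b) ∧ c = Cardinal.mk ↥D}

/-- Density of the subalgebra carried by the set `A`: the least cardinality of a
subset of `A⁺` dense in `A⁺`. -/
noncomputable def densOf {B : Type*} [BooleanAlgebra B] (A : Set B) : Cardinal :=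
  sInf {c : Cardinal | ∃ D : Set B, D ⊆ A ∧ (∀ d ∈ D, d ≠ ⊥) ∧
    (∀ b ∈ A, b ≠ ⊥ → ∃ d ∈ D, d ≤ b) ∧ c = Cardinal.mk ↥D}

/-!
Write `h x` for the least element of `A` above `x`; an element `u` is independent over `A`
exactly when `h u = h uᶜ = ⊤`. Call disjoint `x, y` balanced when `h x = h y`. If no nonzero
balanced pair lay below some `z ≠ ⊥`, every `b ≤ z` would be recovered as `h b ⊓ z`, so the
traces on `z` of a dense subset of `A` would be dense below `z`, and
`dens (B ↾ z) ≤ dens A < dens B`, against uniform density. As `h` preserves joins, the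
balanced pairs are closed under suprema of chains, and a maximal one `(x, y)` (Zorn) must
satisfy `x ⊔ y = ⊤`; then `u₀ = x` is independent. Given `v`, on `c = h v ⊓ h vᶜ` (where `A`
does not decide `v`) take `u = v`, elsewhere `u = u₀`: this `u` is still independent, and
off `c` the element `v` already lies in `A`.
-/

open Cardinal

structure IsCompleteSubalgebra {B : Type*} [CompleteBooleanAlgebra B] (A : Set B) : Prop where
  compl_mem : ∀ x ∈ A, xᶜ ∈ A
  sSup_mem : ∀ X ⊆ A, sSup X ∈ A

section BooleanAlgebra

variable {B : Type*} [BooleanAlgebra B]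

theorem eq_of_inf_eq_of_sdiff_eq {x y c : B} (hinf : x ⊓ c = y ⊓ c) (hsdiff : x \ c = y \ c) :
    x = y := by
  rw [← sup_inf_sdiff x c, hinf, hsdiff, sup_inf_sdiff]

theorem Disjoint.inf_sup_sdiff {v v' w w' : B} (hv : Disjoint v v') (hw : Disjoint w w') (c : B) :
    Disjoint (v ⊓ c ⊔ w \ c) (v' ⊓ c ⊔ w' \ c) := by
  rw [disjoint_sup_left, disjoint_sup_right, disjoint_sup_right]
  exact ⟨⟨hv.mono inf_le_left inf_le_left, disjoint_sdiff_self_right.mono_left inf_le_right⟩,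
    disjoint_sdiff_self_left.mono_right inf_le_right, hw.mono sdiff_le sdiff_le⟩

theorem eq_inf_sup_sdiff_of_inf_eq {u v p q : B} (hvp : v ≤ p) (hvq : vᶜ ≤ q)
    (hu : u ⊓ (p ⊓ q) = v ⊓ (p ⊓ q)) : v = p ⊓ u ⊔ qᶜ \ u := by
  have hqv : qᶜ ≤ v := compl_le_iff_compl_le.1 hvq
  have hqp : Disjoint qᶜ (p ⊓ q) := disjoint_compl_left.mono_right inf_le_right
  refine eq_of_inf_eq_of_sdiff_eq (c := p ⊓ q) ?_ ?_
  · rw [inf_sup_right, inf_comm p u, inf_assoc, inf_left_idem, (hqp.mono_left sdiff_le).eq_bot,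
      sup_bot_eq, hu]
  · have hp : p \ (p ⊓ q) = qᶜ := by
      rw [sdiff_inf_self_left, sdiff_eq, inf_of_le_right (hqv.trans hvp)]
    have hv : v \ (p ⊓ q) = qᶜ := by
      rw [sdiff_inf, sdiff_eq_bot_iff.2 hvp, bot_sup_eq, sdiff_eq, inf_of_le_right hqv]
    rw [hv, sup_sdiff, inf_comm p u, inf_sdiff_assoc, hp, sdiff_right_comm, hqp.sdiff_eq_left,
      inf_comm u, sup_inf_sdiff]

theorem exists_dense_card_eq_densOf (A : Set B) : ∃ D ⊆ A, (∀ d ∈ D, d ≠ ⊥) ∧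
    (∀ b ∈ A, b ≠ ⊥ → ∃ d ∈ D, d ≤ b) ∧ #D = densOf A := by
  obtain ⟨D, hDA, hD, hdense, hcard⟩ := csInf_mem (s := {c : Cardinal | ∃ D : Set B, D ⊆ A ∧
      (∀ d ∈ D, d ≠ ⊥) ∧ (∀ b ∈ A, b ≠ ⊥ → ∃ d ∈ D, d ≤ b) ∧ c = #D})
    ⟨_, A \ {⊥}, Set.sdiff_subset, fun _ hd => hd.2, fun b hb hb0 => ⟨b, ⟨hb, hb0⟩, le_rfl⟩, rfl⟩
  exact ⟨D, hDA, hD, hdense, hcard.symm⟩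

end BooleanAlgebra

section CompleteBooleanAlgebra

variable {B : Type*} [CompleteBooleanAlgebra B] {A : Set B}

/-- The upper projection of `x` to `A`: the least element of `A` above `x` when `A` is complete. -/
def upperProj (A : Set B) (x : B) : B :=
  sInf {a | a ∈ A ∧ x ≤ a}

theorem le_upperProj (x : B) : x ≤ upperProj A x :=
  le_sInf fun _ ha => ha.2

theorem upperProj_le {x a : B} (ha : a ∈ A) (hxa : x ≤ a) : upperProj A x ≤ a :=
  sInf_le ⟨ha, hxa⟩

theorem upperProj_mono : Monotone (upperProj A) :=
  fun _ _ hxy => sInf_le_sInf fun _ ha => ⟨ha.1, hxy.trans ha.2⟩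

theorem upperProj_top : upperProj A (⊤ : B) = ⊤ :=
  top_le_iff.1 (le_upperProj ⊤)

def IsBalancedPair (A : Set B) (p : B × B) : Prop :=
  Disjoint p.1 p.2 ∧ upperProj A p.1 = upperProj A p.2

namespace IsCompleteSubalgebra

theorem sInf_mem (hA : IsCompleteSubalgebra A) {X : Set B} (hX : X ⊆ A) : sInf X ∈ A := by
  rw [← compl_compl (sInf X), compl_sInf']
  exact hA.compl_mem _ <| hA.sSup_mem _ <| by
    rintro _ ⟨x, hx, rfl⟩
    exact hA.compl_mem x (hX hx)

theorem sup_mem (hA : IsCompleteSubalgebra A) {x y : B} (hx : x ∈ A) (hy : y ∈ A) :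
    x ⊔ y ∈ A := by
  rw [← sSup_pair]
  exact hA.sSup_mem _ (Set.pair_subset hx hy)

theorem inf_mem (hA : IsCompleteSubalgebra A) {x y : B} (hx : x ∈ A) (hy : y ∈ A) :
    x ⊓ y ∈ A := by
  rw [← sInf_pair]
  exact hA.sInf_mem (Set.pair_subset hx hy)

theorem upperProj_mem (hA : IsCompleteSubalgebra A) (x : B) : upperProj A x ∈ A :=
  hA.sInf_mem fun _ ha => ha.1

theorem disjoint_upperProj_iff (hA : IsCompleteSubalgebra A) {a : B} (ha : a ∈ A) (x : B) :
    Disjoint a (upperProj A x) ↔ Disjoint a x :=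
  ⟨fun h => h.mono_right (le_upperProj x), fun h =>
    disjoint_compl_right.mono_right (upperProj_le (hA.compl_mem a ha) h.le_compl_left)⟩

theorem upperProj_inf (hA : IsCompleteSubalgebra A) {a : B} (ha : a ∈ A) (x : B) :
    upperProj A (x ⊓ a) = upperProj A x ⊓ a := by
  refine le_antisymm (upperProj_le (hA.inf_mem (hA.upperProj_mem x) ha)
    (inf_le_inf_right a (le_upperProj x))) ?_
  have hx : x ≤ upperProj A (x ⊓ a) ⊔ aᶜ := by
    rw [← sdiff_le_iff', sdiff_compl]
    exact le_upperProj _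
  calc upperProj A x ⊓ a ≤ (upperProj A (x ⊓ a) ⊔ aᶜ) ⊓ a :=
        inf_le_inf_right a (upperProj_le (hA.sup_mem (hA.upperProj_mem _) (hA.compl_mem a ha)) hx)
    _ ≤ upperProj A (x ⊓ a) := by
        rw [inf_sup_right, compl_inf_self, sup_bot_eq]
        exact inf_le_left

theorem upperProj_sSup (hA : IsCompleteSubalgebra A) (X : Set B) :
    upperProj A (sSup X) = sSup (upperProj A '' X) :=
  le_antisymm
    (upperProj_le (hA.sSup_mem _ (Set.image_subset_iff.2 fun x _ => hA.upperProj_mem x))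
      (sSup_le fun x hx => (le_upperProj x).trans (le_sSup (Set.mem_image_of_mem _ hx))))
    (sSup_le (Set.forall_mem_image.2 fun _ hx => upperProj_mono (le_sSup hx)))

theorem upperProj_sup (hA : IsCompleteSubalgebra A) (x y : B) :
    upperProj A (x ⊔ y) = upperProj A x ⊔ upperProj A y := by
  rw [← sSup_pair, hA.upperProj_sSup, Set.image_pair, sSup_pair]

theorem densBelow_le_densOf (hA : IsCompleteSubalgebra A) {z : B}
    (htrace : ∀ b ≤ z, upperProj A b ⊓ z = b) : densBelow z ≤ densOf A := by
  obtain ⟨D, hDA, hD, hdense, hcard⟩ := exists_dense_card_eq_densOf A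
  let T := (· ⊓ z) '' D \ {⊥}
  calc densBelow z ≤ #T := csInf_le' ⟨T, ?_, ?_, rfl⟩
    _ ≤ #D := (mk_le_mk_of_subset Set.sdiff_subset).trans mk_image_le
    _ = densOf A := hcard
  · rintro _ ⟨⟨d, -, rfl⟩, hd⟩
    exact ⟨inf_le_right, hd⟩
  · intro b hbz hb
    obtain ⟨d, hdD, hdb⟩ := hdense _ (hA.upperProj_mem b) (ne_bot_of_le_ne_bot hb (le_upperProj b))
    have hdb' : d ⊓ b ≠ ⊥ := fun h =>
      hD d hdD <| ((hA.disjoint_upperProj_iff (hDA hdD) b).2 (disjoint_iff.2 h)).eq_bot_of_le hdb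
    refine ⟨d ⊓ z, ⟨⟨d, hdD, rfl⟩, ne_bot_of_le_ne_bot hdb' (inf_le_inf_left d hbz)⟩, ?_⟩
    calc d ⊓ z ≤ upperProj A b ⊓ z := inf_le_inf_right z hdb
      _ = b := htrace b hbz

theorem upperProj_inf_eq_of_forall_isBalancedPair (hA : IsCompleteSubalgebra A) {z : B}
    (hz : ∀ p, IsBalancedPair A p → p.1 ≤ z → p.2 ≤ z → p.1 = ⊥) {b : B} (hbz : b ≤ z) :
    upperProj A b ⊓ z = b := by
  set a := upperProj A b ⊓ upperProj A (z \ b)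
  have haA : a ∈ A := hA.inf_mem (hA.upperProj_mem b) (hA.upperProj_mem (z \ b))
  have hpair : IsBalancedPair A (b ⊓ a, z \ b ⊓ a) := by
    refine ⟨disjoint_sdiff_self_right.mono inf_le_left inf_le_left, ?_⟩
    rw [hA.upperProj_inf haA, hA.upperProj_inf haA, inf_of_le_right inf_le_left,
      inf_of_le_right inf_le_right]
  have hba : Disjoint b a :=
    disjoint_iff.2 (hz _ hpair (inf_le_left.trans hbz) (inf_le_left.trans sdiff_le))
  have ha : a = ⊥ :=
    ((hA.disjoint_upperProj_iff haA b).2 hba.symm).eq_bot_of_le inf_le_left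
  have hdisj : Disjoint (upperProj A b) (z \ b) :=
    (hA.disjoint_upperProj_iff (hA.upperProj_mem b) _).1 (disjoint_iff.2 ha)
  conv_lhs => rw [← sup_sdiff_cancel_right hbz]
  rw [inf_sup_left, inf_of_le_right (le_upperProj b), hdisj.eq_bot, sup_bot_eq]

theorem exists_isBalancedPair_le (hA : IsCompleteSubalgebra A) {z : B}
    (hdens : densOf A < densBelow z) :
    ∃ p, IsBalancedPair A p ∧ p.1 ≤ z ∧ p.2 ≤ z ∧ p.1 ≠ ⊥ := by
  by_contra! h
  exact (hA.densBelow_le_densOf fun b hb =>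
    hA.upperProj_inf_eq_of_forall_isBalancedPair h hb).not_gt hdens

theorem isBalancedPair_sSup (hA : IsCompleteSubalgebra A) {c : Set (B × B)}
    (hc : IsChain (· ≤ ·) c) (hbal : ∀ p ∈ c, IsBalancedPair A p) : IsBalancedPair A (sSup c) := by
  rw [IsBalancedPair, Prod.fst_sSup, Prod.snd_sSup]
  constructor
  · simp only [sSup_disjoint_iff, disjoint_sSup_iff, Set.forall_mem_image]
    intro p hp q hq
    rcases hc.total hp hq with hpq | hqp
    · exact (hbal q hq).1.mono_right hpq.2
    · exact (hbal p hp).1.mono_left hqp.1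
  · rw [hA.upperProj_sSup, hA.upperProj_sSup, Set.image_image, Set.image_image]
    exact congrArg sSup (Set.image_congr fun p hp => (hbal p hp).2)

theorem exists_upperProj_eq_top (hA : IsCompleteSubalgebra A)
    (hpairs : ∀ z ≠ ⊥, ∃ p, IsBalancedPair A p ∧ p.1 ≤ z ∧ p.2 ≤ z ∧ p.1 ≠ ⊥) :
    ∃ u, upperProj A u = ⊤ ∧ upperProj A uᶜ = ⊤ := by
  obtain ⟨m, hm⟩ := zorn_le₀ {p | IsBalancedPair A p} fun c hcS hc =>
    ⟨sSup c, hA.isBalancedPair_sSup hc hcS, fun _ => le_sSup⟩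
  have htop : m.1 ⊔ m.2 = ⊤ := by
    by_contra hne
    obtain ⟨q, hq, hq1, hq2, hq0⟩ := hpairs _ (compl_eq_bot.not.2 hne)
    have hmq : IsBalancedPair A (m ⊔ q) := by
      refine ⟨?_, by simp only [Prod.fst_sup, Prod.snd_sup, hA.upperProj_sup, hm.prop.2, hq.2]⟩
      rw [Prod.fst_sup, Prod.snd_sup, disjoint_sup_left, disjoint_sup_right, disjoint_sup_right]
      exact ⟨⟨hm.prop.1, disjoint_compl_right.mono le_sup_left hq2⟩,
        (disjoint_compl_right.mono le_sup_right hq1).symm, hq.1⟩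
    have hqm : q ≤ m := (sup_le_iff.1 (hm.2 hmq le_sup_left)).2
    exact hq0 <| disjoint_self.1 <| disjoint_compl_right.mono (hqm.1.trans le_sup_left) hq1
  have hcompl : m.2 = m.1ᶜ :=
    eq_compl_iff_isCompl.2 ⟨hm.prop.1.symm, codisjoint_iff.2 (sup_comm m.2 m.1 ▸ htop)⟩
  have h1 : upperProj A m.1 = ⊤ := by
    rw [← upperProj_top, ← htop, hA.upperProj_sup, hm.prop.2, sup_idem]
  exact ⟨m.1, h1, hcompl ▸ hm.prop.2 ▸ h1⟩

theorem inf_ne_bot_of_upperProj_eq_top (hA : IsCompleteSubalgebra A) {u a : B}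
    (hu : upperProj A u = ⊤) (ha : a ∈ A) (ha0 : a ≠ ⊥) : a ⊓ u ≠ ⊥ := fun h =>
  ha0 <| disjoint_top.1 <| hu ▸ (hA.disjoint_upperProj_iff ha u).2 (disjoint_iff.2 h)

theorem upperProj_inf_sup_sdiff_eq_top (hA : IsCompleteSubalgebra A) {c v w : B} (hc : c ∈ A)
    (hcv : c ≤ upperProj A v) (hw : upperProj A w = ⊤) : upperProj A (v ⊓ c ⊔ w \ c) = ⊤ := by
  rw [hA.upperProj_sup, sdiff_eq, hA.upperProj_inf hc, hA.upperProj_inf (hA.compl_mem c hc), hw,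
    inf_of_le_right hcv, top_inf_eq, sup_compl_eq_top]

end IsCompleteSubalgebra

end CompleteBooleanAlgebra

/-- Vladimirov's Lemma (Lemma 3.5): let `B` be a complete Boolean algebra of uniform
density and `A` a complete subalgebra of `B` of density less than the density of `B`.
Then for every `v ∈ B` there is `u ∈ B` independent over `A` (i.e. `a ⊓ u ≠ ⊥` and
`a \ u ≠ ⊥` for all nonzero `a ∈ A`) with `v ∈ A(u) = {a₁ ⊓ u ⊔ (a₂ \ u) : a₁, a₂ ∈ A}`. -/
theorem vladimirov {B : Type*} [CompleteBooleanAlgebra B] (A : Set B)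
    (hA : Subalg A) (hAcomplete : ∀ X ⊆ A, sSup X ∈ A)
    (hunif : ∀ a : B, a ≠ ⊥ → densBelow a = densBelow (⊤ : B))
    (hdens : densOf A < densBelow (⊤ : B)) :
    ∀ v : B, ∃ u : B, (∀ a ∈ A, a ≠ ⊥ → a ⊓ u ≠ ⊥ ∧ a \ u ≠ ⊥) ∧
      ∃ a₁ ∈ A, ∃ a₂ ∈ A, v = a₁ ⊓ u ⊔ (a₂ \ u) := by
  have hA' : IsCompleteSubalgebra A := ⟨hA.2.2.2, hAcomplete⟩
  obtain ⟨u₀, hu₀, hu₀c⟩ := hA'.exists_upperProj_eq_top fun z hz =>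
    hA'.exists_isBalancedPair_le (hunif z hz ▸ hdens)
  intro v
  set c := upperProj A v ⊓ upperProj A vᶜ
  have hc : c ∈ A := hA'.inf_mem (hA'.upperProj_mem v) (hA'.upperProj_mem vᶜ)
  set u := v ⊓ c ⊔ u₀ \ c
  have hu : upperProj A u = ⊤ := hA'.upperProj_inf_sup_sdiff_eq_top hc inf_le_left hu₀
  -- `vᶜ ⊓ c ⊔ u₀ᶜ \ c` lies below `uᶜ`
  have huc : upperProj A uᶜ = ⊤ :=
    top_le_iff.1 <| (hA'.upperProj_inf_sup_sdiff_eq_top hc inf_le_right hu₀c).ge.trans <|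
      upperProj_mono (disjoint_compl_right.inf_sup_sdiff disjoint_compl_right c).le_compl_left
  refine ⟨u, fun a ha ha0 => ⟨hA'.inf_ne_bot_of_upperProj_eq_top hu ha ha0, ?_⟩,
    upperProj A v, hA'.upperProj_mem v, (upperProj A vᶜ)ᶜ, hA'.compl_mem _ (hA'.upperProj_mem vᶜ),
    eq_inf_sup_sdiff_of_inf_eq (le_upperProj v) (le_upperProj vᶜ) ?_⟩
  · rw [sdiff_eq]
    exact hA'.inf_ne_bot_of_upperProj_eq_top huc ha ha0
  · rw [inf_sup_right, inf_assoc, inf_idem, disjoint_sdiff_self_left.eq_bot, sup_bot_eq]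
end

section
/- If B is a semi-Cohen Boolean algebra and A is a regular subalgebra of B of uniform density, then A is semi-Cohen. -/
/-- Density below `a` of the subalgebra carried by `A`. -/
noncomputable def densIn {B : Type*} [BooleanAlgebra B] (A : Set B) (a : B) : Cardinal :=
  sInf {c : Cardinal | ∃ D : Set B, D ⊆ A ∧ (∀ d ∈ D, d ≤ a ∧ d ≠ ⊥) ∧
    (∀ b ∈ A, b ≤ a → b ≠ ⊥ → ∃ d ∈ D, d ≤ b) ∧ c = Cardinal.mk ↥D}

/-- The subalgebra carried by `A` has uniform density. -/
def UnifDensIn {B : Type*} [BooleanAlgebra B] (A : Set B) : Prop :=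
  ∀ a ∈ A, a ≠ ⊥ → densIn A a = densIn A ⊤

/-- The subalgebra carried by `A` is semi-Cohen: it has uniform density and a closed
unbounded family of countable regular subalgebras. -/
def SemiCohen {B : Type*} [BooleanAlgebra B] (A : Set B) : Prop :=
  UnifDensIn A ∧ ∃ C : Set (Set B), ClubIn A C ∧ ∀ X ∈ C, Subalg X ∧ RegIn X A

/-!
Every nonzero `x ∈ B` has a reduction to the regular subalgebra `A`: a nonzero `y ∈ A` such
that every nonzero element of `A` below `y` meets `x`. If a subalgebra `Y ⊆ A` sits inside a
regular subalgebra `Z` of `B` and contains a reduction of every nonzero element of `Z`, then a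
maximal antichain of `Y` is maximal in `Z`, hence in `B`, hence in `A`; so `Y` is regular in `A`.
Taking for `Z` a member `G Y` of the club of `B`, where `G` is a Skolem-type hull generated by
finite subsets and therefore commutes with unions of chains, the countable subalgebras `Y ⊆ A`
containing reductions of all nonzero elements of `G Y` form a club of `A`; unboundedness comes
from closing under the Boolean operations and the reductions `ω` times.
-/

section Sets

variable {α : Type*}

lemma Set.Countable.exists_monotone_finset {Y : Set α} (hY : Y.Countable) :
    ∃ S : ℕ → Finset α, Monotone S ∧ Y = ⋃ n, (S n : Set α) := by
  classical
  rcases Y.eq_empty_or_nonempty with rfl | hne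
  · exact ⟨fun _ => ∅, monotone_const, by simp⟩
  obtain ⟨f, rfl⟩ := hY.exists_eq_range hne
  refine ⟨fun n => (Finset.range n).image f,
    fun m n hmn => Finset.image_subset_image (Finset.range_subset_range.2 hmn), ?_⟩
  ext x
  simp only [Set.mem_range, Set.mem_iUnion, Finset.coe_image, Finset.coe_range, Set.mem_image,
    Set.mem_Iio]
  exact ⟨fun ⟨k, hk⟩ => ⟨k + 1, k, k.lt_succ_self, hk⟩, fun ⟨_, k, _, hk⟩ => ⟨k, hk⟩⟩

lemma Monotone.exists_mem_mem_of_mem_iUnion {f : ℕ → Set α} (hf : Monotone f) {x y : α}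
    (hx : x ∈ ⋃ n, f n) (hy : y ∈ ⋃ n, f n) : ∃ n, x ∈ f n ∧ y ∈ f n := by
  obtain ⟨m, hm⟩ := Set.mem_iUnion.1 hx
  obtain ⟨n, hn⟩ := Set.mem_iUnion.1 hy
  exact ⟨max m n, hf (le_max_left m n) hm, hf (le_max_right m n) hn⟩

lemma map_iUnion_iterate_subset {T : Set α → Set α} (hT : id ≤ T)
    (hcont : ∀ f : ℕ → Set α, Monotone f → T (⋃ n, f n) ⊆ ⋃ n, T (f n)) (Y : Set α) :
    T (⋃ n, T^[n] Y) ⊆ ⋃ n, T^[n] Y :=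
  (hcont _ fun _ _ hmn => Function.monotone_iterate_of_id_le hT hmn Y).trans <|
    Set.iUnion_subset fun n => by
      rw [← Function.iterate_succ_apply' T n Y]
      exact Set.subset_iUnion (fun n => T^[n] Y) (n + 1)

end Sets

section Hull

variable {α : Type*} {C : Set (Set α)}

open Classical in
noncomputable def clubCover (C : Set (Set α)) (x : Set α) : Set α :=
  if h : ∃ y ∈ C, x ⊆ y then h.choose else x

lemma clubCover_spec (hC : ClubIn Set.univ C) {x : Set α} (hx : x.Countable) :
    x ⊆ clubCover C x ∧ clubCover C x ∈ C := by
  have h : ∃ y ∈ C, x ⊆ y := hC.2.2 x (Set.subset_univ x) hx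
  rw [clubCover, dif_pos h]
  exact ⟨h.choose_spec.2, h.choose_spec.1⟩

noncomputable def finsetHull (C : Set (Set α)) : Finset α → Set α
  | s => clubCover C (↑s ∪ ⋃ t ∈ {t : Finset α | t ⊂ s}, finsetHull C t)
termination_by s => s.card
decreasing_by exact Finset.card_lt_card (by assumption)

lemma finsetHull_spec (hC : ClubIn Set.univ C) (s : Finset α) :
    finsetHull C s ∈ C ∧ ↑s ∪ ⋃ t ∈ {t : Finset α | t ⊂ s}, finsetHull C t ⊆ finsetHull C s := by
  induction s using Finset.strongInduction with
  | _ s ih =>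
    have hssubsets : {t : Finset α | t ⊂ s}.Countable :=
      (s.powerset.finite_toSet.subset fun t ht => Finset.mem_powerset.2 ht.subset).countable
    have hcount : (↑s ∪ ⋃ t ∈ {t : Finset α | t ⊂ s}, finsetHull C t).Countable :=
      s.finite_toSet.countable.union <| hssubsets.biUnion fun t ht => (hC.1 _ (ih t ht).1).2
    rw [finsetHull]
    exact (clubCover_spec hC hcount).symm

lemma finsetHull_mem (hC : ClubIn Set.univ C) (s : Finset α) : finsetHull C s ∈ C :=
  (finsetHull_spec hC s).1

lemma coe_subset_finsetHull (hC : ClubIn Set.univ C) (s : Finset α) : ↑s ⊆ finsetHull C s :=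
  Set.subset_union_left.trans (finsetHull_spec hC s).2

lemma finsetHull_mono (hC : ClubIn Set.univ C) {s t : Finset α} (hst : s ⊆ t) :
    finsetHull C s ⊆ finsetHull C t := by
  rcases hst.eq_or_ssubset with rfl | hlt
  · rfl
  · exact (Set.subset_biUnion_of_mem (u := finsetHull C) hlt).trans
      (Set.subset_union_right.trans (finsetHull_spec hC t).2)

noncomputable def clubHull (C : Set (Set α)) (Y : Set α) : Set α :=
  ⋃ (s : Finset α) (_ : ↑s ⊆ Y), finsetHull C s

lemma clubHull_iUnion (C : Set (Set α)) {f : ℕ → Set α} (hf : Monotone f) :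
    clubHull C (⋃ n, f n) = ⋃ n, clubHull C (f n) := by
  simp only [clubHull]
  refine Set.Subset.antisymm (Set.iUnion₂_subset fun s hs => ?_) <| Set.iUnion_subset fun n =>
    Set.iUnion₂_mono' fun s hs => ⟨s, hs.trans (Set.subset_iUnion f n), le_rfl⟩
  obtain ⟨n, hn⟩ := hf.directed_le.exists_mem_subset_of_finset_subset_biUnion hs
  exact (Set.subset_iUnion₂ (s := fun s (_ : ↑s ⊆ f n) => finsetHull C s) s hn).trans
    (Set.subset_iUnion (fun n => ⋃ (s : Finset α) (_ : ↑s ⊆ f n), finsetHull C s) n)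

lemma subset_clubHull (hC : ClubIn Set.univ C) (Y : Set α) : Y ⊆ clubHull C Y := fun y hy =>
  Set.mem_iUnion₂.2 ⟨{y}, by simpa using hy, coe_subset_finsetHull hC {y} (by simp)⟩

lemma clubHull_coe (hC : ClubIn Set.univ C) (s : Finset α) : clubHull C ↑s = finsetHull C s :=
  Set.Subset.antisymm
    (Set.iUnion₂_subset fun _ ht => finsetHull_mono hC (Finset.coe_subset.1 ht))
    (Set.subset_iUnion₂ (s := fun (t : Finset α) (_ : (t : Set α) ⊆ ↑s) => finsetHull C t) s
      subset_rfl)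

lemma clubHull_mem (hC : ClubIn Set.univ C) {Y : Set α} (hY : Y.Countable) :
    clubHull C Y ∈ C := by
  obtain ⟨S, hS, rfl⟩ := hY.exists_monotone_finset
  rw [clubHull_iUnion C fun m n hmn => Finset.coe_subset.2 (hS hmn)]
  simp only [clubHull_coe hC]
  exact hC.2.1 _ (fun n => finsetHull_mem hC (S n)) fun m n hmn => finsetHull_mono hC (hS hmn)

end Hull

section Reduction

variable {B : Type*} [BooleanAlgebra B]

lemma Subalg.inf_mem {A : Set B} (hA : Subalg A) {x y : B} (hx : x ∈ A) (hy : y ∈ A) :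
    x ⊓ y ∈ A := by
  simpa [compl_sup] using hA.2.2.2 _ (hA.2.2.1 _ (hA.2.2.2 _ hx) _ (hA.2.2.2 _ hy))

lemma Subalg.iUnion {f : ℕ → Set B} (hf : ∀ n, Subalg (f n)) (hmono : Monotone f) :
    Subalg (⋃ n, f n) := by
  refine ⟨Set.mem_iUnion.2 ⟨0, (hf 0).1⟩, Set.mem_iUnion.2 ⟨0, (hf 0).2.1⟩,
    fun x hx y hy => ?_, fun x hx => ?_⟩
  · obtain ⟨n, hxn, hyn⟩ := hmono.exists_mem_mem_of_mem_iUnion hx hy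
    exact Set.mem_iUnion.2 ⟨n, (hf n).2.2.1 x hxn y hyn⟩
  · obtain ⟨n, hn⟩ := Set.mem_iUnion.1 hx
    exact Set.mem_iUnion.2 ⟨n, (hf n).2.2.2 x hn⟩

lemma MaxACIn.restrict {W A A' : Set B} (hW : MaxACIn W A) (hWA' : W ⊆ A') (hA' : A' ⊆ A) :
    MaxACIn W A' :=
  ⟨hWA', hW.2.1, hW.2.2.1, fun a ha => hW.2.2.2 a (hA' ha)⟩

lemma exists_maxACIn_subset_of_dense {A D : Set B} (hDA : D ⊆ A) (hD : ⊥ ∉ D)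
    (hdense : ∀ a ∈ A, a ≠ ⊥ → ∃ d ∈ D, d ≤ a) : ∃ W ⊆ D, MaxACIn W A := by
  obtain ⟨W, ⟨hWD, hWpair⟩, hWmax⟩ := zorn_subset
    {W : Set B | W ⊆ D ∧ W.Pairwise fun x y => x ⊓ y = ⊥} fun c hcS hc =>
      ⟨⋃₀ c, ⟨Set.sUnion_subset fun W hW => (hcS hW).1,
        hc.pairwise_sUnion.2 fun W hW => (hcS hW).2⟩, fun _ => Set.subset_sUnion_of_mem⟩
  refine ⟨W, hWD, hWD.trans hDA, fun h => hD (hWD h), hWpair, fun a ha ha0 => ?_⟩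
  by_contra! hdisj
  obtain ⟨d, hdD, hda⟩ := hdense a ha ha0
  have hdW : d ∈ W := by
    refine hWmax ⟨Set.insert_subset hdD hWD, hWpair.insert fun w hw _ => ?_⟩
      (Set.subset_insert d W) (Set.mem_insert d W)
    have hdw : d ⊓ w = ⊥ := le_bot_iff.1 (hdisj w hw ▸ inf_le_inf_right w hda)
    exact ⟨hdw, by rwa [inf_comm]⟩
  have hd0 : d = ⊥ := (inf_eq_right.2 hda).symm.trans (hdisj d hdW)
  exact hD (hd0 ▸ hdD)

def IsReduction (A : Set B) (x y : B) : Prop :=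
  y ∈ A ∧ y ≠ ⊥ ∧ ∀ z ∈ A, z ≠ ⊥ → z ≤ y → z ⊓ x ≠ ⊥

/-- Without a reduction, the elements of `A` disjoint from `x` are dense in `A`, and a maximal
antichain of them would be maximal in `A` but miss `x`. -/
lemma RegIn.exists_isReduction {A : Set B} (hreg : RegIn A Set.univ) {x : B} (hx : x ≠ ⊥) :
    ∃ y, IsReduction A x y := by
  by_contra! hnone
  obtain ⟨W, hWD, hW⟩ := exists_maxACIn_subset_of_dense (D := {z ∈ A | z ≠ ⊥ ∧ z ⊓ x = ⊥})
    (fun z hz => hz.1) (fun h => h.2.1 rfl) fun a ha ha0 => by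
      simp only [IsReduction, not_and, not_forall, not_not] at hnone
      obtain ⟨z, hzA, hz0, hza, hzx⟩ := hnone a ha ha0
      exact ⟨z, ⟨hzA, hz0, hzx⟩, hza⟩
  obtain ⟨w, hwW, hwx⟩ := (hreg W hW).2.2.2 x (Set.mem_univ x) hx
  exact hwx (inf_comm x w ▸ (hWD hwW).2.2)

variable {A : Set B}

lemma maxACIn_of_isReduction {Y Z W : Set B} (hA : Subalg A) (hYA : Y ⊆ A) (hYZ : Y ⊆ Z)
    (hred : ∀ a ∈ Z, a ≠ ⊥ → ∃ y ∈ Y, IsReduction A a y) (hW : MaxACIn W Y) :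
    MaxACIn W Z := by
  refine ⟨hW.1.trans hYZ, hW.2.1, hW.2.2.1, fun a ha ha0 => ?_⟩
  obtain ⟨y, hyY, -, hy0, hy⟩ := hred a ha ha0
  obtain ⟨w, hwW, hyw⟩ := hW.2.2.2 y hyY hy0
  refine ⟨w, hwW, fun haw => hy (y ⊓ w) (hA.inf_mem (hYA hyY) (hYA (hW.1 hwW))) hyw inf_le_left ?_⟩
  exact le_bot_iff.1 (haw ▸ le_inf inf_le_right (inf_le_left.trans inf_le_right))

lemma regIn_of_isReduction {Y Z : Set B} (hA : Subalg A) (hYA : Y ⊆ A) (hYZ : Y ⊆ Z)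
    (hZ : RegIn Z Set.univ) (hred : ∀ a ∈ Z, a ≠ ⊥ → ∃ y ∈ Y, IsReduction A a y) :
    RegIn Y A := fun W hW =>
  (hZ W (maxACIn_of_isReduction hA hYA hYZ hred hW)).restrict (hW.1.trans hYA) (Set.subset_univ A)

end Reduction

section ReductionClub

variable {B : Type*} [BooleanAlgebra B] {A : Set B} {G : Set B → Set B}

def reductionClub (A : Set B) (G : Set B → Set B) : Set (Set B) :=
  {Y | Y ⊆ A ∧ Y.Countable ∧ Subalg Y ∧ ∀ a ∈ G Y, a ≠ ⊥ → ∃ y ∈ Y, IsReduction A a y}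

lemma iUnion_mem_reductionClub {f : ℕ → Set B} (hG : G (⋃ n, f n) = ⋃ n, G (f n))
    (hf : ∀ n, f n ∈ reductionClub A G) (hmono : Monotone f) :
    (⋃ n, f n) ∈ reductionClub A G := by
  refine ⟨Set.iUnion_subset fun n => (hf n).1, Set.countable_iUnion fun n => (hf n).2.1,
    Subalg.iUnion (fun n => (hf n).2.2.1) hmono, fun a ha ha0 => ?_⟩
  rw [hG] at ha
  obtain ⟨n, han⟩ := Set.mem_iUnion.1 ha
  obtain ⟨y, hy, hred⟩ := (hf n).2.2.2 a han ha0
  exact ⟨y, Set.mem_iUnion.2 ⟨n, hy⟩, hred⟩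

def reductionStep (r : B → B) (G : Set B → Set B) (Y : Set B) : Set B :=
  {⊥, ⊤} ∪ Y ∪ Set.image2 (· ⊔ ·) Y Y ∪ compl '' Y ∪ r '' (G Y \ {⊥})

lemma subset_reductionStep (r : B → B) (G : Set B → Set B) (Y : Set B) :
    Y ⊆ reductionStep r G Y := fun _ hy => Or.inl (Or.inl (Or.inl (Or.inr hy)))

lemma reductionStep_subset {r : B → B} (hA : Subalg A) (hr : ∀ a, a ≠ ⊥ → r a ∈ A) {Y : Set B}
    (hY : Y ⊆ A) : reductionStep r G Y ⊆ A := by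
  rintro x ((((hx | hx) | ⟨a, ha, b, hb, rfl⟩) | ⟨a, ha, rfl⟩) | ⟨a, ⟨-, ha0⟩, rfl⟩)
  · rcases hx with rfl | rfl
    exacts [hA.1, hA.2.1]
  · exact hY hx
  · exact hA.2.2.1 a (hY ha) b (hY hb)
  · exact hA.2.2.2 a (hY ha)
  · exact hr a ha0

lemma Set.Countable.reductionStep {r : B → B} (hG : ∀ Y : Set B, Y.Countable → (G Y).Countable)
    {Y : Set B} (hY : Y.Countable) : (reductionStep r G Y).Countable :=
  ((((Set.toFinite {⊥, ⊤}).countable.union hY).union (hY.image2 hY _)).union (hY.image _)).union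
    (((hG Y hY).mono Set.sdiff_subset).image r)

lemma subalg_of_reductionStep_subset {r : B → B} {Y : Set B} (h : reductionStep r G Y ⊆ Y) :
    Subalg Y :=
  ⟨h (Or.inl (Or.inl (Or.inl (Or.inl (Or.inl rfl))))),
    h (Or.inl (Or.inl (Or.inl (Or.inl (Or.inr rfl))))),
    fun x hx y hy => h (Or.inl (Or.inl (Or.inr ⟨x, hx, y, hy, rfl⟩))),
    fun x hx => h (Or.inl (Or.inr ⟨x, hx, rfl⟩))⟩

lemma reductionStep_iUnion_subset (r : B → B) {f : ℕ → Set B} (hmono : Monotone f)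
    (hG : G (⋃ n, f n) = ⋃ n, G (f n)) :
    reductionStep r G (⋃ n, f n) ⊆ ⋃ n, reductionStep r G (f n) := by
  rw [reductionStep, hG]
  rintro x ((((hx | hx) | ⟨a, ha, b, hb, rfl⟩) | ⟨a, ha, rfl⟩) | ⟨a, ⟨ha, ha0⟩, rfl⟩)
  · exact Set.mem_iUnion.2 ⟨0, Or.inl (Or.inl (Or.inl (Or.inl hx)))⟩
  · obtain ⟨n, hn⟩ := Set.mem_iUnion.1 hx
    exact Set.mem_iUnion.2 ⟨n, Or.inl (Or.inl (Or.inl (Or.inr hn)))⟩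
  · obtain ⟨n, han, hbn⟩ := hmono.exists_mem_mem_of_mem_iUnion ha hb
    exact Set.mem_iUnion.2 ⟨n, Or.inl (Or.inl (Or.inr ⟨a, han, b, hbn, rfl⟩))⟩
  · obtain ⟨n, hn⟩ := Set.mem_iUnion.1 ha
    exact Set.mem_iUnion.2 ⟨n, Or.inl (Or.inr ⟨a, hn, rfl⟩)⟩
  · obtain ⟨n, hn⟩ := Set.mem_iUnion.1 ha
    exact Set.mem_iUnion.2 ⟨n, Or.inr ⟨a, ⟨hn, ha0⟩, rfl⟩⟩

lemma exists_superset_mem_reductionClub (hA : Subalg A) (hreg : RegIn A Set.univ)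
    (hGc : ∀ Y : Set B, Y.Countable → (G Y).Countable)
    (hG : ∀ f : ℕ → Set B, Monotone f → G (⋃ n, f n) = ⋃ n, G (f n))
    {X : Set B} (hXA : X ⊆ A) (hX : X.Countable) : ∃ Y ∈ reductionClub A G, X ⊆ Y := by
  choose! r hr using fun x (hx : x ≠ ⊥) => hreg.exists_isReduction hx
  set T := reductionStep r G
  have hTZ : T (⋃ n, T^[n] X) ⊆ ⋃ n, T^[n] X :=
    map_iUnion_iterate_subset (subset_reductionStep r G)
      (fun f hf => reductionStep_iUnion_subset r hf (hG f hf)) X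
  refine ⟨⋃ n, T^[n] X, ⟨?_, ?_, subalg_of_reductionStep_subset hTZ, fun a ha ha0 => ?_⟩,
    Set.subset_iUnion (fun n => T^[n] X) 0⟩
  · exact Set.iUnion_subset <|
      Function.Iterate.rec (· ⊆ A) hXA fun Y => reductionStep_subset hA fun a ha => (hr a ha).1
  · exact Set.countable_iUnion <|
      Function.Iterate.rec Set.Countable hX fun Y => Set.Countable.reductionStep hGc
  · exact ⟨r a, hTZ (Or.inr ⟨a, ⟨ha, ha0⟩, rfl⟩), hr a ha0⟩

end ReductionClub

/-- Theorem 4.1: a regular subalgebra of uniform density of a semi-Cohen algebra is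
semi-Cohen. -/
theorem semiCohen_of_regular_subalgebra {B : Type*} [BooleanAlgebra B] (A : Set B)
    (hB : SemiCohen (Set.univ : Set B)) (hA : Subalg A) (hreg : RegIn A Set.univ)
    (hud : UnifDensIn A) : SemiCohen A := by
  obtain ⟨-, C, hC, hCreg⟩ := hB
  have hGc (Y : Set B) (hY : Y.Countable) : (clubHull C Y).Countable :=
    (hC.1 _ (clubHull_mem hC hY)).2
  refine ⟨hud, reductionClub A (clubHull C), ⟨fun Y hY => ⟨hY.1, hY.2.1⟩, ?_, ?_⟩, ?_⟩
  · exact fun f hf hmono => iUnion_mem_reductionClub (clubHull_iUnion C hmono) hf hmono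
  · exact fun X hXA hX => exists_superset_mem_reductionClub hA hreg hGc
      (fun f hf => clubHull_iUnion C hf) hXA hX
  · intro Y hY
    exact ⟨hY.2.2.1, regIn_of_isReduction hA hY.1 (subset_clubHull hC Y)
      (hCreg _ (clubHull_mem hC hY.2.1)).2 hY.2.2.2⟩
end

section
/- If B is a Boolean algebra such that the set S = {A ∈ [B]^ω : A is a regular subalgebra of B} is stationary, then player I does not have a winning strategy in the game G on B in which the players alternately choose elements a₀, b₀, a₁, b₁, … of B and player II wins if the subalgebra generated by all chosen elements is a regular subalgebra of B. -/
/-!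
Sets closed under a strategy `σ` of player I (applied to finite lists of II's moves) form a
closed unbounded family of countable sets, so by stationarity some countable regular subalgebra
`A` is closed under `σ`. Player II enumerates `A`; then every move of either player lies in `A`,
so the subalgebra generated by the play is `A` itself, which is regular.
-/

def ClosedUnder {α : Type*} (σ : List α → α) (x : Set α) : Prop :=
  ∀ l : List α, (∀ a ∈ l, a ∈ x) → σ l ∈ x

theorem Set.Countable.setOf_forall_mem_list {α : Type*} {s : Set α} (hs : s.Countable) :
    {l : List α | ∀ a ∈ l, a ∈ s}.Countable := by
  have := hs.to_subtype
  refine (Set.countable_range fun l : List s => l.map Subtype.val).mono fun l hl => ?_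
  exact ⟨l.pmap Subtype.mk hl, by simp [List.map_pmap]⟩

theorem Monotone.exists_forall_mem_list_of_mem_iUnion {α : Type*} {f : ℕ → Set α}
    (hf : Monotone f) {l : List α} (hl : ∀ a ∈ l, a ∈ ⋃ n, f n) : ∃ n, ∀ a ∈ l, a ∈ f n := by
  classical
  obtain ⟨n, hn⟩ := hf.directed_le.exists_mem_subset_of_finset_subset_biUnion
    (s := l.toFinset) fun a ha => hl a (List.mem_toFinset.mp ha)
  exact ⟨n, fun a ha => hn (List.mem_toFinset.mpr ha)⟩

namespace ClosedUnder

variable {α : Type*} (σ : List α → α)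

theorem iUnion_of_monotone {f : ℕ → Set α} (hf : Monotone f)
    (hσ : ∀ n, ClosedUnder σ (f n)) : ClosedUnder σ (⋃ n, f n) := fun l hl =>
  let ⟨n, hn⟩ := hf.exists_forall_mem_list_of_mem_iUnion hl
  Set.mem_iUnion.mpr ⟨n, hσ n l hn⟩

def step (x : Set α) : Set α :=
  x ∪ σ '' {l | ∀ a ∈ l, a ∈ x}

theorem monotone_iterate_step (x : Set α) : Monotone fun n => (step σ)^[n] x :=
  monotone_nat_of_le_succ fun n => by
    rw [Function.iterate_succ_apply']
    exact Set.subset_union_left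

theorem countable_iterate_step {x : Set α} (hx : x.Countable) (n : ℕ) :
    ((step σ)^[n] x).Countable := by
  induction n with
  | zero => exact hx
  | succ n ih =>
    rw [Function.iterate_succ_apply']
    exact ih.union (ih.setOf_forall_mem_list.image σ)

theorem iUnion_iterate_step (x : Set α) : ClosedUnder σ (⋃ n, (step σ)^[n] x) := fun l hl =>
  let ⟨n, hn⟩ := (monotone_iterate_step σ x).exists_forall_mem_list_of_mem_iUnion hl
  Set.mem_iUnion.mpr ⟨n + 1, by
    rw [Function.iterate_succ_apply']
    exact Or.inr ⟨l, hn, rfl⟩⟩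

theorem exists_countable_superset {x : Set α} (hx : x.Countable) :
    ∃ y, (y.Countable ∧ ClosedUnder σ y) ∧ x ⊆ y :=
  ⟨⋃ n, (step σ)^[n] x,
    ⟨Set.countable_iUnion (countable_iterate_step σ hx), iUnion_iterate_step σ x⟩,
    Set.subset_iUnion (fun n => (step σ)^[n] x) 0⟩

theorem clubIn_countable : ClubIn Set.univ {x | x.Countable ∧ ClosedUnder σ x} :=
  ⟨fun x hx => ⟨Set.subset_univ x, hx.1⟩,
    fun _ hf hmono => ⟨Set.countable_iUnion fun n => (hf n).1,
      iUnion_of_monotone σ hmono fun n => (hf n).2⟩,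
    fun _ _ hx => exists_countable_superset σ hx⟩

theorem range_ofFn_subset {A : Set α} (hA : ClosedUnder σ A) {b : ℕ → α}
    (hb : Set.range b ⊆ A) : Set.range (fun n => σ (List.ofFn fun i : Fin n => b i)) ⊆ A := by
  rintro _ ⟨n, rfl⟩
  refine hA _ fun a ha => hb ?_
  obtain ⟨i, rfl⟩ := List.mem_ofFn.mp ha
  exact ⟨i, rfl⟩

end ClosedUnder

theorem sInter_subalg_superset_eq {B : Type*} [BooleanAlgebra B] {A T : Set B} (hA : Subalg A)
    (hTA : T ⊆ A) (hAT : A ⊆ T) : ⋂₀ {A' | Subalg A' ∧ T ⊆ A'} = A :=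
  (Set.sInter_subset_of_mem (show A ∈ {A' | Subalg A' ∧ T ⊆ A'} from ⟨hA, hTA⟩)).antisymm
    (Set.subset_sInter fun _ hA' => hAT.trans hA'.2)

/-- Theorem 6.3 ((a)→(c)): if the countable regular subalgebras of `B` form a
stationary family (i.e. `B` is pseudo-Cohen), then player I has no winning strategy
in the game `G`: for every strategy `σ` of I (producing I'\''s move from II'\''s previous
moves) there is a play `b` of II such that the subalgebra generated by all chosen
elements is a regular subalgebra of `B`, so II wins. -/
theorem no_winning_strategy_of_stationary {B : Type*} [BooleanAlgebra B]
    (hstat : StatIn (Set.univ : Set B)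
      {A | A.Countable ∧ Subalg A ∧ RegIn A Set.univ}) :
    ∀ σ : List B → B, ∃ b : ℕ → B,
      RegIn (⋂₀ {A : Set B | Subalg A ∧
          Set.range b ∪ Set.range (fun n => σ (List.ofFn fun i : Fin n => b i)) ⊆ A})
        Set.univ := by
  intro σ
  obtain ⟨A, ⟨hAc, hAalg, hAreg⟩, -, hAσ⟩ := hstat _ (ClosedUnder.clubIn_countable σ)
  obtain ⟨b, rfl⟩ := hAc.exists_eq_range ⟨⊥, hAalg.1⟩
  refine ⟨b, ?_⟩
  rwa [sInter_subalg_superset_eq hAalg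
    (Set.union_subset subset_rfl (hAσ.range_ofFn_subset σ subset_rfl)) Set.subset_union_left]
end

section
/- Every Boolean algebra can be decomposed into algebras of uniform density: for every Boolean algebra B there is a partition of unity (a maximal antichain) {a_i} such that each relative algebra B ↾ a_i has uniform density. -/
/-- `W` is a partition of unity (maximal antichain) of `B`. -/
def BAPartitionOfUnity {B : Type*} [BooleanAlgebra B] (W : Set B) : Prop :=
  ⊥ ∉ W ∧ W.Pairwise (fun x y => x ⊓ y = ⊥) ∧ ∀ b : B, b ≠ ⊥ → ∃ w ∈ W, b ⊓ w ≠ ⊥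

lemma densSet_nonempty {B : Type*} [BooleanAlgebra B] (a : B) :
    {c : Cardinal | ∃ D : Set B, (∀ d ∈ D, d ≤ a ∧ d ≠ ⊥) ∧
      (∀ b : B, b ≤ a → b ≠ ⊥ → ∃ d ∈ D, d ≤ b) ∧ c = Cardinal.mk ↥D}.Nonempty :=
  ⟨_, {d : B | d ≤ a ∧ d ≠ ⊥}, fun _ hd => hd, fun b hb hb0 => ⟨b, ⟨hb, hb0⟩, le_rfl⟩, rfl⟩

lemma densBelow_mono' {B : Type*} [BooleanAlgebra B] {a b : B} (hba : b ≤ a) :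
    densBelow b ≤ densBelow a := by
  obtain ⟨D, hD1, hD2, hc⟩ := csInf_mem (densSet_nonempty a)
  set D' : Set B := {d ∈ D | d ≤ b} with hD'
  have h1 : ∀ d ∈ D', d ≤ b ∧ d ≠ ⊥ := fun d hd => ⟨hd.2, (hD1 d hd.1).2⟩
  have h2 : ∀ c : B, c ≤ b → c ≠ ⊥ → ∃ d ∈ D', d ≤ c := by
    intro c hcb hc0
    obtain ⟨d, hd, hdc⟩ := hD2 c (hcb.trans hba) hc0
    exact ⟨d, ⟨hd, hdc.trans hcb⟩, hdc⟩
  calc densBelow b ≤ Cardinal.mk ↥D' := csInf_le' ⟨D', h1, h2, rfl⟩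
    _ ≤ Cardinal.mk ↥D := Cardinal.mk_le_mk_of_subset (Set.sep_subset _ _)
    _ = densBelow a := hc.symm

/-- The set of elements below which `densBelow` is uniform is dense. -/
lemma exists_uniform_below {B : Type*} [BooleanAlgebra B] {a : B} (ha : a ≠ ⊥) :
    ∃ u : B, u ≤ a ∧ u ≠ ⊥ ∧ ∀ c : B, c ≤ u → c ≠ ⊥ → densBelow c = densBelow u := by
  set S : Set Cardinal := {c | ∃ b : B, b ≤ a ∧ b ≠ ⊥ ∧ densBelow b = c} with hS
  have hSne : S.Nonempty := ⟨densBelow a, a, le_rfl, ha, rfl⟩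
  obtain ⟨m, hmS, hmin⟩ := Cardinal.lt_wf.has_min S hSne
  obtain ⟨u, hua, hu0, hum⟩ := hmS
  refine ⟨u, hua, hu0, fun c hcu hc0 => ?_⟩
  have h1 : densBelow c ≤ densBelow u := densBelow_mono' hcu
  have h2 : ¬ densBelow c < m := hmin _ ⟨c, hcu.trans hua, hc0, rfl⟩
  rw [hum] at h1 ⊢
  exact le_antisymm h1 (not_lt.mp h2)

/-- Every Boolean algebra decomposes into algebras of uniform density: there is a
partition of unity `W` such that each relative algebra `B ↾ a`, `a ∈ W`, has uniform
density, i.e. the density below every nonzero `b ≤ a` equals the density below `a`. -/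
theorem decomposition_into_uniform_density {B : Type*} [BooleanAlgebra B] :
    ∃ W : Set B, BAPartitionOfUnity W ∧
      ∀ a ∈ W, ∀ b : B, b ≤ a → b ≠ ⊥ → densBelow b = densBelow a := by
  set U : Set B := {u | u ≠ ⊥ ∧ ∀ c : B, c ≤ u → c ≠ ⊥ → densBelow c = densBelow u} with hU
  set F : Set (Set B) := {T | T ⊆ U ∧ T.Pairwise (fun x y => x ⊓ y = ⊥)} with hF
  obtain ⟨W, hWF, hWmax⟩ : ∃ W, Maximal (· ∈ F) W := by
    apply zorn_subset
    intro c hcF hchain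
    refine ⟨⋃₀ c, ⟨?_, ?_⟩, fun s hs => Set.subset_sUnion_of_mem hs⟩
    · exact fun x ⟨s, hs, hxs⟩ => (hcF hs).1 hxs
    · intro x ⟨s, hs, hxs⟩ y ⟨t, ht, hyt⟩ hxy
      rcases hchain.total hs ht with h | h
      · exact (hcF ht).2 (h hxs) hyt hxy
      · exact (hcF hs).2 hxs (h hyt) hxy
  refine ⟨W, ⟨fun hbot => (hWF.1 hbot).1 rfl, hWF.2, ?_⟩, fun a haW => (hWF.1 haW).2⟩
  intro b hb0
  by_contra hcon
  push_neg at hcon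
  obtain ⟨u, hub, hu0, huni⟩ := exists_uniform_below hb0
  have huW : u ∉ W := fun h => by
    have := hcon u h
    rw [inf_eq_right.mpr hub] at this
    exact hu0 this
  have hins : insert u W ∈ F := by
    refine ⟨Set.insert_subset ⟨hu0, huni⟩ hWF.1, hWF.2.insert fun w hw hne => ?_⟩
    have h1 : u ⊓ w = ⊥ :=
      le_bot_iff.mp ((inf_le_inf_right w hub).trans (hcon w hw).le)
    exact ⟨h1, by rw [inf_comm]; exact h1⟩
  have := hWmax hins (Set.subset_insert u W)
  exact huW (this (Set.mem_insert u W))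
end
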